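/- arXiv:1005.5527 — 3 statements merged into one kernel-verified Lean document; each statement's English description precedes it below -/
import Mathlib

section
/- Let φ : E → X be a covering map between topological spaces and let V ⊆ X be a subset. Assume that every loop in V lifts to loops: for every p ∈ V, every loop γ at p with range contained in V, and every e in the fiber φ⁻¹({p}), the lift of γ starting at e ends at e. Then for every path α in E whose range is contained in φ⁻¹(V) and which satisfies φ(α(0)) = φ(α(1)), one has α(0) = α(1); in particular, φ is injective on every path component of φ⁻¹(V). -/
open unitInterval

/-- If `φ : E → X` is a covering map, `V ⊆ X`, and every loop in `V`
lifts to loops (every lift of any loop at a point of `V` with range in `V`, starting at any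
point of the fiber, ends where it started), then every path in `E` with range in `φ⁻¹(V)`
whose endpoints have the same image under `φ` is a loop; in particular `φ` is injective on
every path component of `φ⁻¹(V)`. -/
theorem covering_injective_on_path_components
    {E X : Type} [TopologicalSpace E] [TopologicalSpace X]
    (φ : E → X) (hφ : IsCoveringMap φ) (V : Set X)
    (hloops : ∀ p ∈ V, ∀ γ : Path p p, Set.range ⇑γ ⊆ V →
      ∀ e : E, φ e = p →
        ∀ Γ : C(I, E), (∀ t, φ (Γ t) = γ t) → Γ 0 = e → Γ 1 = e) :
    (∀ (a b : E) (α : Path a b), Set.range ⇑α ⊆ φ ⁻¹' V → φ a = φ b → a = b) ∧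
    (∀ a b : E, JoinedIn (φ ⁻¹' V) a b → φ a = φ b → a = b) := by
  have key : ∀ (a b : E) (α : Path a b), Set.range ⇑α ⊆ φ ⁻¹' V → φ a = φ b → a = b := by
    intro a b α hα hab
    have hpV : φ a ∈ V := by
      have : a ∈ Set.range ⇑α := ⟨0, α.source⟩
      exact hα this
    let γ : Path (φ a) (φ a) :=
      { toContinuousMap := ⟨fun t => φ (α t), (hφ.continuous).comp α.continuous⟩
        source' := by simp
        target' := by simp [hab.symm] }
    have hγV : Set.range ⇑γ ⊆ V := by
      rintro _ ⟨t, rfl⟩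
      exact hα ⟨t, rfl⟩
    have := hloops (φ a) hpV γ hγV a rfl α.toContinuousMap (fun t => rfl) (by simp)
    have hb : α.toContinuousMap 1 = a := this
    simpa using hb.symm
  refine ⟨key, ?_⟩
  intro a b hj hab
  obtain ⟨α, hα⟩ := hj
  exact key a b α (by rintro _ ⟨t, rfl⟩; exact hα t) hab
end

section
/- Let φ : E → X be a covering map between topological spaces and let V ⊆ X be an open, path-connected, locally path-connected subset. Assume that every loop in V lifts to loops: for every p ∈ V, every loop γ at p with range contained in V, and every e ∈ φ⁻¹({p}), the lift of γ starting at e ends at e. Then for every path component Ṽ of φ⁻¹(V), the restriction of φ to Ṽ is a homeomorphism of Ṽ onto V. -/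
/-!
Two points of a path component `Ṽ` of `φ⁻¹(V)` over the same point of `V` are joined by a path
in `φ⁻¹(V)` which is the lift of a loop in `V`; as loops lift to loops, the two points agree, so
`φ` is injective on `Ṽ`. Lifting paths of `V` starting in `Ṽ` shows `φ(Ṽ) = V`. Finally `φ⁻¹(V)`
is locally homeomorphic to the locally path-connected space `V`, so `Ṽ` is open, and the
covering map `φ` is open; hence the continuous bijection `Ṽ → V` is a homeomorphism.
-/

open unitInterval Set Topology

section

variable {E X : Type*} [TopologicalSpace E] [TopologicalSpace X]

theorem IsLocalHomeomorph.locallyPathConnectedSpace [LocallyPathConnectedSpace X] {f : E → X}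
    (hf : IsLocalHomeomorph f) : LocallyPathConnectedSpace E := by
  choose h hx _ using hf
  have basis (x : E) : (𝓝 x).HasBasis
      (fun s ↦ s ∈ 𝓝 (h x x) ∧ IsPathConnected s ∧ s ⊆ (h x).target) ((h x).symm '' ·) := by
    rw [← (h x).symm_map_nhds_eq (hx x)]
    exact (pathConnected_subset_basis (h x).open_target ((h x).map_source (hx x))).map _
  exact .of_bases basis fun x s ⟨_, hs, hst⟩ ↦ hs.image' ((h x).continuousOn_symm.mono hst)

theorem image_val_pathComponent {F : Set X} (x : F) :
    Subtype.val '' pathComponent x = pathComponentIn F x := by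
  ext y
  constructor
  · rintro ⟨y, hxy, rfl⟩
    exact (joinedIn_iff_joined x.2 y.2).2 hxy
  · intro hxy
    exact ⟨⟨y, hxy.mem.2⟩, (joinedIn_iff_joined x.2 hxy.mem.2).1 hxy, rfl⟩

theorem IsOpen.isOpen_pathComponentIn {F : Set X} (hF : IsOpen F) [LocallyPathConnectedSpace F]
    (x : X) : IsOpen (pathComponentIn F x) := by
  by_cases hx : x ∈ F
  · rw [← image_val_pathComponent ⟨x, hx⟩]
    exact hF.isOpenMap_subtype_val _ (.pathComponent _)
  · rw [← pathComponentIn_nonempty_iff, not_nonempty_iff_eq_empty] at hx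
    exact hx ▸ isOpen_empty

theorem IsOpenMap.exists_homeomorph_of_injOn {f : E → X} (hfo : IsOpenMap f) (hfc : Continuous f)
    {s : Set E} {t : Set X} (hs : IsOpen s) (hinj : InjOn f s) (himage : f '' s = t) :
    ∃ ψ : s ≃ₜ t, ∀ x, (ψ x : X) = f x := by
  have hemb : IsOpenEmbedding (s.domRestrict f) :=
    .of_continuous_injective_isOpenMap (hfc.comp continuous_subtype_val) hinj.injective
      (hfo.domRestrict hs)
  exact ⟨hemb.toIsEmbedding.toHomeomorph.trans (.setCongr (by rw [range_domRestrict, himage])),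
    fun _ ↦ rfl⟩

def LoopsLiftToLoops (φ : E → X) (V : Set X) : Prop :=
  ∀ p ∈ V, ∀ γ : Path p p, range γ ⊆ V →
    ∀ e : E, φ e = p → ∀ Γ : C(I, E), (∀ t, φ (Γ t) = γ t) → Γ 0 = e → Γ 1 = e

theorem LoopsLiftToLoops.injOn_pathComponentIn {φ : E → X} (hφ : Continuous φ) {V : Set X}
    (hV : LoopsLiftToLoops φ V) (e : E) : InjOn φ (pathComponentIn (φ ⁻¹' V) e) := by
  intro x hx y hy hxy
  obtain ⟨α, hαV⟩ := (JoinedIn.symm hx).trans hy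
  have hγV : range ((α.map hφ).cast rfl hxy) ⊆ V := range_subset_iff.2 hαV
  have hαloop := hV _ (mem_preimage.1 (pathComponentIn_subset hx)) _ hγV x rfl α (fun _ ↦ rfl)
    α.source
  exact hαloop.symm.trans α.target

namespace IsCoveringMap

variable {φ : E → X} (hφ : IsCoveringMap φ) {V : Set X}
include hφ

theorem isOpen_pathComponentIn_preimage (hV : IsOpen V) [LocallyPathConnectedSpace V] (e : E) :
    IsOpen (pathComponentIn (φ ⁻¹' V) e) :=
  have := (hφ.restrictPreimage V).isLocalHomeomorph.locallyPathConnectedSpace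
  (hV.preimage hφ.continuous).isOpen_pathComponentIn e

theorem image_pathComponentIn_preimage (hV : IsPathConnected V) {e : E} (he : φ e ∈ V) :
    φ '' pathComponentIn (φ ⁻¹' V) e = V := by
  refine (image_subset_iff.2 pathComponentIn_subset).antisymm fun v hv ↦ ?_
  obtain ⟨γ, hγV⟩ := hV.joinedIn _ he _ hv
  let Γ := hφ.liftPath γ e γ.source
  have hΓ : ∀ t, φ (Γ t) = γ t := congrFun (hφ.liftPath_lifts _ _ _)
  refine ⟨Γ 1, ⟨⟨Γ, hφ.liftPath_zero _ _ _, rfl⟩, fun t ↦ ?_⟩, by rw [hΓ, γ.target]⟩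
  show φ (Γ t) ∈ V
  exact hΓ t ▸ hγV t

end IsCoveringMap

end

/-- If `φ : E → X` is a covering map and `V ⊆ X` is open, path-connected
and locally path-connected, and every loop in `V` lifts to loops, then the restriction of
`φ` to any path component of `φ⁻¹(V)` is a homeomorphism onto `V`. -/
theorem covering_trivial_over_loop_lifting_region
    {E X : Type} [TopologicalSpace E] [TopologicalSpace X]
    (φ : E → X) (hφ : IsCoveringMap φ) (V : Set X)
    (hVopen : IsOpen V) (hVpc : IsPathConnected V) (hVlpc : LocPathConnectedSpace V)
    (hloops : ∀ p ∈ V, ∀ γ : Path p p, Set.range ⇑γ ⊆ V →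
      ∀ e : E, φ e = p →
        ∀ Γ : C(I, E), (∀ t, φ (Γ t) = γ t) → Γ 0 = e → Γ 1 = e) :
    ∀ e : E, φ e ∈ V →
      ∃ ψ : ↥(pathComponentIn (φ ⁻¹' V) e) ≃ₜ ↥V,
        ∀ x : ↥(pathComponentIn (φ ⁻¹' V) e), (ψ x : X) = φ (x : E) := by
  intro e he
  have : LocallyPathConnectedSpace V := hVlpc
  have hloops' : LoopsLiftToLoops φ V := hloops
  exact hφ.isOpenMap.exists_homeomorph_of_injOn hφ.continuous
    (hφ.isOpen_pathComponentIn_preimage hVopen e)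
    (hloops'.injOn_pathComponentIn hφ.continuous e)
    (hφ.image_pathComponentIn_preimage hVpc he)
end

section
/- Let X be a topological space, S ⊆ Σ ⊆ X subsets (with subspace topologies), s₀ ∈ S, and let i : S ↪ Σ, m : Σ ↪ X and j = m ∘ i : S ↪ X denote the inclusions. Let φ : E → X be a covering map and e₀ ∈ φ⁻¹({s₀}). Assume: (a) m_# : π₁(Σ, s₀) → π₁(X, s₀) is injective; (b) φ_#(π₁(E, e₀)) ⊆ j_#(π₁(S, s₀)) as subgroups of π₁(X, s₀); and (c) there exists a continuous map σ : Σ → E with φ ∘ σ = m and σ(s₀) = e₀ (i.e., the inclusion of Σ lifts through φ). Then i_# : π₁(S, s₀) → π₁(Σ, s₀) is surjective. -/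
/-!
The lift `σ` factors `m_#` through `φ_#`, so by (b) every element of `π₁(Σ)` is sent by `m_#`
into the image of `j_# = m_# ∘ i_#`; injectivity of `m_#` then pulls this back to `π₁(Σ)`.
-/

open CategoryTheory

/-- The homomorphism of fundamental groups induced by a continuous map. -/
noncomputable def inducedPi1Map {A X : Type} [TopologicalSpace A] [TopologicalSpace X]
    (f : C(A, X)) (a : A) :
    FundamentalGroup A a →* FundamentalGroup X (f a) :=
  Functor.mapEnd (⟨a⟩ : FundamentalGroupoid (TopCat.of A))
    (FundamentalGroupoid.fundamentalGroupoidFunctor.map (X := TopCat.of A) (Y := TopCat.of X) (TopCat.ofHom f))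

theorem MonoidHom.surjective_of_range_le_range_comp {G H K : Type*} [Group G] [Group H]
    [Group K] {i : G →* H} {m : H →* K} (hm : Function.Injective m)
    (h : m.range ≤ (m.comp i).range) : Function.Surjective i := fun y =>
  let ⟨x, hx⟩ := h ⟨y, rfl⟩
  ⟨x, hm hx⟩

theorem inducedPi1Map_comp {A B X : Type} [TopologicalSpace A] [TopologicalSpace B]
    [TopologicalSpace X] (f : C(A, B)) (g : C(B, X)) (a : A) :
    inducedPi1Map (g.comp f) a = (inducedPi1Map g (f a)).comp (inducedPi1Map f a) := by
  ext γ
  induction γ using Quotient.inductionOn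
  rfl

/-- The transport `h ▸` is needed to state the inclusion; when `m a` and `p e` agree
definitionally, `h` can be `rfl` and the transport disappears. -/
theorem range_inducedPi1Map_le_of_lift {A E X : Type} [TopologicalSpace A] [TopologicalSpace E]
    [TopologicalSpace X] {p : C(E, X)} {m : C(A, X)} {σ : C(A, E)} (hσ : ∀ x, p (σ x) = m x)
    {a : A} {e : E} (he : σ a = e) (h : m a = p e) :
    h ▸ (inducedPi1Map m a).range ≤ (inducedPi1Map p e).range := by
  obtain rfl : p.comp σ = m := ContinuousMap.ext hσ
  subst he
  rw [inducedPi1Map_comp]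
  exact (MonoidHom.map_range _ _).symm.trans_le (Subgroup.map_le_range _ _)

/-- Let `S ⊆ Sig ⊆ X` with inclusions `i : S ↪ Sig`, `m : Sig ↪ X`,
`j = m ∘ i`, and basepoint `s₀ = φ e₀ ∈ S` for a covering map `φ : E → X`. If
(a) `m_#` is injective, (b) `φ_#(π₁(E,e₀)) ⊆ j_#(π₁(S,s₀))`, and (c) the inclusion of
`Sig` lifts through `φ` via a continuous `σ` with `σ s₀ = e₀`, then
`i_# : π₁(S,s₀) → π₁(Sig,s₀)` is surjective. -/
theorem pi1_surjective_of_section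
    {E X : Type} [TopologicalSpace E] [TopologicalSpace X]
    (S Sig : Set X) (hSSig : S ⊆ Sig)
    (φ : E → X) (hφ : IsCoveringMap φ)
    (e₀ : E) (hs₀ : φ e₀ ∈ S)
    (hinj : Function.Injective
      (inducedPi1Map (⟨Subtype.val, continuous_subtype_val⟩ : C(↥Sig, X))
        ⟨φ e₀, hSSig hs₀⟩))
    (hsub : (inducedPi1Map (⟨φ, hφ.continuous⟩ : C(E, X)) e₀).range ≤
      (inducedPi1Map (⟨Subtype.val, continuous_subtype_val⟩ : C(↥S, X)) ⟨φ e₀, hs₀⟩).range)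
    (σ : C(↥Sig, E)) (hσ : ∀ x : ↥Sig, φ (σ x) = (x : X))
    (hσ₀ : σ ⟨φ e₀, hSSig hs₀⟩ = e₀) :
    Function.Surjective
      (inducedPi1Map (⟨Set.inclusion hSSig, continuous_inclusion hSSig⟩ : C(↥S, ↥Sig))
        ⟨φ e₀, hs₀⟩) := by
  refine MonoidHom.surjective_of_range_le_range_comp hinj ?_
  calc _ ≤ _ := range_inducedPi1Map_le_of_lift (p := ⟨φ, hφ.continuous⟩)
        (m := ⟨Subtype.val, continuous_subtype_val⟩) hσ hσ₀ rfl
    _ ≤ _ := hsub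
    _ = _ := congrArg MonoidHom.range <| inducedPi1Map_comp
        ⟨Set.inclusion hSSig, continuous_inclusion hSSig⟩ ⟨Subtype.val, continuous_subtype_val⟩ _
end
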